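/- Let G be a normed gyrogroup and let ε > 0. Then the collection ℬ_ε = {B(x, ε) : x ∈ G} of all open balls of radius ε with respect to the gyronorm metric d_η is a minimally invariant set of the geometry (G, Γ_m): T(B) ∈ ℬ_ε for all B ∈ ℬ_ε and T ∈ Γ_m, and ℬ_ε contains no nonempty proper invariant subset. -/

import Mathlib

/-- A gyrogroup: a set with a binary operation `op`, a left identity `e`, left inverses
`inv`, and gyroautomorphisms `gyr a b` (bijective and operation-preserving) satisfying the
left gyroassociative law and the left loop property. -/
class Gyrogroup (G : Type*) where
  /-- the gyrogroup operation `⊕` -/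
  op : G → G → G
  /-- the identity element -/
  e : G
  /-- the inverse `⊖a` -/
  inv : G → G
  /-- (G1) `e ⊕ a = a` -/
  op_e : ∀ a : G, op e a = a
  /-- (G2) `⊖a ⊕ a = e` -/
  op_inv : ∀ a : G, op (inv a) a = e
  /-- the gyroautomorphism `gyr[a, b]` -/
  gyr : G → G → G → G
  /-- (G3) `gyr[a, b]` is bijective -/
  gyr_bijective : ∀ a b : G, Function.Bijective (gyr a b)
  /-- (G3) `gyr[a, b]` preserves the operation -/
  gyr_op : ∀ a b x y : G, gyr a b (op x y) = op (gyr a b x) (gyr a b y)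
  /-- (G3) the left gyroassociative law -/
  gyrassoc : ∀ a b c : G, op a (op b c) = op (op a b) (gyr a b c)
  /-- (G4) the left loop property -/
  loop : ∀ a b : G, gyr (op a b) b = gyr a b

namespace Gyrogroup

variable {G : Type*} [Gyrogroup G]

theorem key (x z : G) : op (inv x) (op x z) = gyr (inv x) x z := by
  rw [gyrassoc, op_inv, op_e]

theorem L_injective (x : G) : Function.Injective (op x) := by
  intro z₁ z₂ h
  have h1 : gyr (inv x) x z₁ = gyr (inv x) x z₂ := by
    rw [← key, ← key, h]
  exact (gyr_bijective (inv x) x).1 h1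

theorem L_surjective (x : G) : Function.Surjective (op x) := by
  intro w
  obtain ⟨z, hz⟩ := (gyr_bijective (inv x) x).2 (op (inv x) w)
  exact ⟨z, L_injective (inv x) (by rw [key, hz])⟩

theorem L_bijective (x : G) : Function.Bijective (op x) :=
  ⟨L_injective x, L_surjective x⟩

/-- The left gyrotranslation `L_a : x ↦ a ⊕ x` as a permutation of `G`. -/
noncomputable def Lperm (a : G) : Equiv.Perm G := Equiv.ofBijective (op a) (L_bijective a)

/-- The gyroautomorphism `gyr[a, b]` as a permutation of `G`. -/
noncomputable def gyrPerm (a b : G) : Equiv.Perm G := Equiv.ofBijective (gyr a b) (gyr_bijective a b)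

/-- `GYR(G)`: the subgroup of `Sym(G)` generated by all gyroautomorphisms. -/
def GYR (G : Type*) [Gyrogroup G] : Subgroup (Equiv.Perm G) :=
  Subgroup.closure {π : Equiv.Perm G | ∃ a b : G, π = gyrPerm a b}

/-- `Γₘ = {L_a ∘ γ : a ∈ G, γ ∈ GYR(G)}`, a subgroup of `Sym(G)`. -/
def Γm (G : Type*) [Gyrogroup G] : Set (Equiv.Perm G) :=
  {T : Equiv.Perm G | ∃ a : G, ∃ γ ∈ GYR G, T = Lperm a * γ}

end Gyrogroup

/-- A set of figures is invariant if it is closed under all transformations of the geometry. -/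
def IsInvariantSet {S : Type*} (𝒯 : Set (Equiv.Perm S)) (𝒞 : Set (Set S)) : Prop :=
  ∀ F ∈ 𝒞, ∀ t ∈ 𝒯, ⇑t '' F ∈ 𝒞

/-- An invariant set is minimally invariant if it contains no nonempty proper invariant
subset. -/
def IsMinimallyInvariantSet {S : Type*} (𝒯 : Set (Equiv.Perm S)) (𝒞 : Set (Set S)) : Prop :=
  IsInvariantSet 𝒯 𝒞 ∧ ∀ 𝒟 ⊆ 𝒞, IsInvariantSet 𝒯 𝒟 → 𝒟.Nonempty → 𝒟 = 𝒞

/-- A normed gyrogroup: a gyrogroup equipped with a gyronorm `‖·‖ : G → ℝ` that is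
nonnegative (vanishing exactly at the identity), invariant under taking inverses,
subadditive, and invariant under gyrations. -/
class NormedGyrogroup (G : Type*) extends Gyrogroup G where
  /-- the gyronorm -/
  gnorm : G → ℝ
  gnorm_nonneg : ∀ x : G, 0 ≤ gnorm x
  gnorm_eq_zero_iff : ∀ x : G, gnorm x = 0 ↔ x = e
  gnorm_inv : ∀ x : G, gnorm (inv x) = gnorm x
  gnorm_op_le : ∀ x y : G, gnorm (op x y) ≤ gnorm x + gnorm y
  gnorm_gyr : ∀ a b x : G, gnorm (gyr a b x) = gnorm x

/-- The gyronorm metric `d_η(x, y) = ‖⊖x ⊕ y‖` of a normed gyrogroup. -/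
def dEta {G : Type*} [NormedGyrogroup G] (x y : G) : ℝ :=
  NormedGyrogroup.gnorm (Gyrogroup.op (Gyrogroup.inv x) y)

/-- The open ball `B(x, ε) = {y ∈ G : d_η(x, y) < ε}` in a normed gyrogroup. -/
def gyroBall {G : Type*} [NormedGyrogroup G] (x : G) (ε : ℝ) : Set G :=
  {y : G | dEta x y < ε}

/-!
Every transformation in `Γₘ` is a bijective isometry of the gyronorm metric: gyrations preserve
the gyronorm, and by the left gyrotranslation theorem `⊖(a ⊕ x) ⊕ (a ⊕ y) = gyr[a, x](⊖x ⊕ y)`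
left gyrotranslations only twist `⊖x ⊕ y` by a gyration. Hence `Γₘ` maps `B(x, ε)` onto
`B(T x, ε)`. Conversely `Γₘ` acts transitively on points, since
`(x ⊖ x₀) ⊕ gyr[x, ⊖x₀] x₀ = x ⊕ (⊖x₀ ⊕ x₀) = x`, so any nonempty invariant family of such
balls already contains all of them.
-/

theorem IsMinimallyInvariantSet.of_transitive {S : Type*} {𝒯 : Set (Equiv.Perm S)}
    {𝒞 : Set (Set S)} (hinv : IsInvariantSet 𝒯 𝒞)
    (htrans : ∀ F ∈ 𝒞, ∀ F' ∈ 𝒞, ∃ t ∈ 𝒯, ⇑t '' F = F') :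
    IsMinimallyInvariantSet 𝒯 𝒞 := by
  refine ⟨hinv, fun 𝒟 h𝒟 h𝒟inv ⟨F, hF⟩ => h𝒟.antisymm fun F' hF' => ?_⟩
  obtain ⟨t, ht, rfl⟩ := htrans F (h𝒟 hF) F' hF'
  exact h𝒟inv F hF t ht

namespace Gyrogroup

variable {G : Type*} [Gyrogroup G]

theorem gyr_e_left_apply (a c : G) : gyr e a c = c := by
  have h := gyrassoc e a c
  rw [op_e, op_e] at h
  exact (L_injective a h).symm

theorem gyr_inv_self_apply (a c : G) : gyr (inv a) a c = c := by
  rw [← loop, op_inv, gyr_e_left_apply]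

theorem inv_op_cancel_left (a z : G) : op (inv a) (op a z) = z := by
  rw [key, gyr_inv_self_apply]

theorem op_e_right (a : G) : op a e = a :=
  L_injective (inv a) (by rw [inv_op_cancel_left, op_inv])

theorem inv_inv (a : G) : inv (inv a) = a := by
  simpa only [op_inv, op_e_right] using inv_op_cancel_left (inv a) a

theorem op_inv_cancel_left (a y : G) : op a (op (inv a) y) = y := by
  simpa only [inv_inv] using inv_op_cancel_left (inv a) y

theorem gyr_apply_e (a b : G) : gyr a b e = e :=
  L_injective (op a b) (by rw [← gyrassoc, op_e_right, op_e_right])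

theorem eq_inv_of_op_eq_e {a b : G} (h : op b a = e) : b = inv a := by
  have hb : inv b = a := by simpa only [h, op_e_right] using inv_op_cancel_left b a
  rw [← hb, inv_inv]

theorem gyr_apply_inv (a b x : G) : gyr a b (inv x) = inv (gyr a b x) :=
  eq_inv_of_op_eq_e (by rw [← gyr_op, op_inv, gyr_apply_e])

theorem left_gyrotranslation (a x y : G) :
    op (inv (op a x)) (op a y) = gyr a x (op (inv x) y) := by
  have h : op (op a x) (gyr a x (op (inv x) y)) = op a y := by
    rw [← gyrassoc, op_inv_cancel_left]
  rw [← h, inv_op_cancel_left]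

theorem exists_mem_Γm_apply_eq (x₀ x : G) : ∃ T ∈ Γm G, T x₀ = x :=
  ⟨Lperm (op x (inv x₀)) * gyrPerm x (inv x₀),
    ⟨_, _, Subgroup.subset_closure ⟨x, inv x₀, rfl⟩, rfl⟩,
    show op (op x (inv x₀)) (gyr x (inv x₀) x₀) = x by rw [← gyrassoc, op_inv, op_e_right]⟩

end Gyrogroup

open Gyrogroup

section Isometry

variable {G : Type*} [NormedGyrogroup G]

theorem dEta_op_op (a x y : G) : dEta (op a x) (op a y) = dEta x y := by
  rw [dEta, dEta, left_gyrotranslation, NormedGyrogroup.gnorm_gyr]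

theorem dEta_gyr_gyr (a b x y : G) : dEta (gyr a b x) (gyr a b y) = dEta x y := by
  rw [dEta, dEta, ← gyr_apply_inv, ← gyr_op, NormedGyrogroup.gnorm_gyr]

def dEtaIsometryGroup (G : Type*) [NormedGyrogroup G] : Subgroup (Equiv.Perm G) where
  carrier := {T | ∀ x y, dEta (T x) (T y) = dEta x y}
  one_mem' _ _ := rfl
  mul_mem' hS hT x y := (hS _ _).trans (hT x y)
  inv_mem' {T} hT x y := by
    simpa only [Equiv.Perm.coe_inv, Equiv.apply_symm_apply] using (hT (T⁻¹ x) (T⁻¹ y)).symm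

theorem GYR_le_dEtaIsometryGroup : GYR G ≤ dEtaIsometryGroup G :=
  (Subgroup.closure_le _).2 fun _ ⟨a, b, hπ⟩ => hπ ▸ dEta_gyr_gyr a b

theorem Γm_subset_dEtaIsometryGroup : Γm G ⊆ dEtaIsometryGroup G := by
  rintro _ ⟨a, γ, hγ, rfl⟩
  exact mul_mem (fun x y => dEta_op_op a x y) (GYR_le_dEtaIsometryGroup hγ)

theorem image_gyroBall {T : Equiv.Perm G} (hT : T ∈ dEtaIsometryGroup G) (x : G) (ε : ℝ) :
    ⇑T '' gyroBall x ε = gyroBall (T x) ε := by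
  ext z
  rw [Equiv.image_eq_preimage_symm, Set.mem_preimage]
  simp only [gyroBall, Set.mem_ofPred_eq]
  rw [← hT x (T.symm z), Equiv.apply_symm_apply]

end Isometry

theorem stmt19_general {G : Type*} [NormedGyrogroup G] (ε : ℝ) :
    IsMinimallyInvariantSet (Γm G) {B : Set G | ∃ x : G, B = gyroBall x ε} := by
  have image_ball {T : Equiv.Perm G} (hT : T ∈ Γm G) (x : G) :
      ⇑T '' gyroBall x ε = gyroBall (T x) ε :=
    image_gyroBall (Γm_subset_dEtaIsometryGroup hT) x ε
  refine .of_transitive ?_ ?_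
  · rintro _ ⟨x, rfl⟩ T hT
    exact ⟨T x, image_ball hT x⟩
  · rintro _ ⟨x₀, rfl⟩ _ ⟨x, rfl⟩
    obtain ⟨T, hT, hTx₀⟩ := exists_mem_Γm_apply_eq x₀ x
    exact ⟨T, hT, by rw [image_ball hT, hTx₀]⟩

open Gyrogroup in
/-- For a normed gyrogroup `G` and `ε > 0`, the collection of all open balls of radius `ε`
(with respect to the gyronorm metric) is a minimally invariant set of the geometry
`(G, Γₘ)`. -/
theorem stmt19 {G : Type*} [NormedGyrogroup G] (ε : ℝ) (hε : 0 < ε) :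
    IsMinimallyInvariantSet (Γm G) {B : Set G | ∃ x : G, B = gyroBall x ε} :=
  stmt19_general ε
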